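/- arXiv:1503.06567 — 5 statements merged into one kernel-verified Lean document; each statement's English description precedes it below -/
import Mathlib

section
/- Let β* be an N×K nonnegative matrix whose columns sum to 1 (each column is a probability distribution over words, one per topic). Suppose each topic i has a set of anchor words A_i ⊆ {1,…,N} (i.e., β*_{i',j} = 0 for all j ∈ A_i and i' ≠ i) with total weight Σ_{j∈A_i} β*_{i,j} ≥ p. Then for every vector v ∈ ℝ^K, ‖β* v‖₁ ≥ p‖v‖₁. -/
/-- Anchor-word expansion: if each topic has anchor words of total weight ≥ p,
then ‖β* v‖₁ ≥ p ‖v‖₁. -/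
theorem stmt0 (N K : ℕ) (β : Fin K → Fin N → ℝ) (p : ℝ)
    (hβnn : ∀ i j, 0 ≤ β i j)
    (hβsum : ∀ i, ∑ j, β i j = 1)
    (A : Fin K → Finset (Fin N))
    (hanchor : ∀ i, ∀ j ∈ A i, ∀ i', i' ≠ i → β i' j = 0)
    (hweight : ∀ i, p ≤ ∑ j ∈ A i, β i j) :
    ∀ v : Fin K → ℝ, p * ∑ i, |v i| ≤ ∑ j, |∑ i, β i j * v i| := by
  intro v
  set f : Fin N → ℝ := fun j => |∑ i, β i j * v i| with hf
  have hfnn : ∀ j, 0 ≤ f j := fun j => abs_nonneg _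
  by_cases hp : p ≤ 0
  · have h1 : p * ∑ i, |v i| ≤ 0 :=
      mul_nonpos_of_nonpos_of_nonneg hp (Finset.sum_nonneg fun i _ => abs_nonneg _)
    exact h1.trans (Finset.sum_nonneg fun j _ => abs_nonneg _)
  push_neg at hp
  -- Step 1: for each i, p * |v i| ≤ ∑ j ∈ A i, f j
  have step1 : ∀ i, p * |v i| ≤ ∑ j ∈ A i, f j := by
    intro i
    have hval : ∀ j ∈ A i, f j = β i j * |v i| := by
      intro j hj
      have : ∑ i', β i' j * v i' = β i j * v i := by
        apply Finset.sum_eq_single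
        · intro i' _ hi'
          rw [hanchor i j hj i' hi', zero_mul]
        · intro h; exact absurd (Finset.mem_univ i) h
      rw [hf]
      simp only [this, abs_mul, abs_of_nonneg (hβnn i j)]
    rw [Finset.sum_congr rfl hval, ← Finset.sum_mul]
    exact mul_le_mul_of_nonneg_right (hweight i) (abs_nonneg _)
  -- Step 2: ∑ i, ∑ j ∈ A i, f j ≤ ∑ j, f j
  have step2 : ∑ i, ∑ j ∈ A i, f j ≤ ∑ j, f j := by
    have hrw : ∀ i : Fin K, ∑ j ∈ A i, f j = ∑ j, if j ∈ A i then f j else 0 := by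
      intro i; rw [Finset.sum_ite_mem, Finset.univ_inter]
    simp only [hrw]
    rw [Finset.sum_comm]
    apply Finset.sum_le_sum
    intro j _
    by_cases hov : ∃ i₁ i₂ : Fin K, i₁ ≠ i₂ ∧ j ∈ A i₁ ∧ j ∈ A i₂
    · obtain ⟨i₁, i₂, hne, h1, h2⟩ := hov
      have hfz : f j = 0 := by
        rw [hf]
        have : ∀ i : Fin K, β i j * v i = 0 := by
          intro i
          rcases ne_or_eq i i₁ with h | h
          · rw [hanchor i₁ j h1 i h, zero_mul]
          · rw [hanchor i₂ j h2 i (h ▸ hne), zero_mul]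
        simp [this]
      have : ∀ i : Fin K, (if j ∈ A i then f j else 0) = 0 := by
        intro i; rw [hfz]; simp
      simp [this, hfz]
    · push_neg at hov
      by_cases hex : ∃ i₀ : Fin K, j ∈ A i₀
      · obtain ⟨i₀, hi₀⟩ := hex
        have : ∑ i : Fin K, (if j ∈ A i then f j else 0) = f j := by
          rw [Finset.sum_eq_single i₀]
          · simp [hi₀]
          · intro i _ hne
            have : j ∉ A i := fun hmem => hne (by
              by_contra h
              exact (hov i i₀ h hmem hi₀))
            simp [this]
          · intro h; exact absurd (Finset.mem_univ i₀) h
        rw [this]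
      · push_neg at hex
        have : ∀ i : Fin K, (if j ∈ A i then f j else 0) = 0 := by
          intro i; simp [hex i]
        rw [Finset.sum_congr rfl (fun i _ => this i), Finset.sum_const, smul_zero]
        exact hfnn j
  calc p * ∑ i, |v i| = ∑ i, p * |v i| := Finset.mul_sum _ _ _
    _ ≤ ∑ i, ∑ j ∈ A i, f j := Finset.sum_le_sum fun i _ => step1 i
    _ ≤ ∑ j, f j := step2
end

section
/- Fix a topic i with anchor set A_i of total true weight Σ_{j∈A_i} β*_{i,j} ≥ p. Suppose β^t_{i',j} ≤ b · β^t_{i,j} for all i' ≠ i and all j ∈ A_i, with 0 ≤ b < 1. Suppose γ^t ∈ Δ_K satisfies the stationarity condition Σ_{j∈A_i} (f̃_j / f^t_j) β^t_{i,j} ≤ 1, where f^t_j = Σ_{i'} β^t_{i',j} γ^t_{i'}, and f̃_j ≥ (1−ε) β*_{i,j} γ*_i for all j ∈ A_i. Then γ^t_i ≥ (1−ε) (p/(1−b)) γ*_i − b/(1−b). -/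
/-- Lower bound on γ^t_i from the stationarity condition over anchor words. -/
theorem stmt6 (N K : ℕ) (i : Fin K) (A : Finset (Fin N))
    (βs : Fin N → ℝ) (βt : Fin K → Fin N → ℝ) (γt : Fin K → ℝ)
    (ftilde : Fin N → ℝ) (p b ε γsi : ℝ)
    (hb0 : 0 ≤ b) (hb1 : b < 1) (hε0 : 0 ≤ ε) (hε1 : ε < 1)
    (hγsi : 0 ≤ γsi)
    (hβsnn : ∀ j, 0 ≤ βs j)
    (hp : p ≤ ∑ j ∈ A, βs j)
    (hβtnn : ∀ i' j, 0 ≤ βt i' j)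
    (hβtb : ∀ i', i' ≠ i → ∀ j ∈ A, βt i' j ≤ b * βt i j)
    (hγnn : ∀ i', 0 ≤ γt i') (hγsum : ∑ i', γt i' = 1)
    (hftpos : ∀ j ∈ A, 0 < ∑ i', βt i' j * γt i')
    (hstat : ∑ j ∈ A, ftilde j / (∑ i', βt i' j * γt i') * βt i j ≤ 1)
    (hftilde : ∀ j ∈ A, (1 - ε) * βs j * γsi ≤ ftilde j) :
    (1 - ε) * (p / (1 - b)) * γsi - b / (1 - b) ≤ γt i := by
  have h1b : (0:ℝ) < 1 - b := by linarith
  set c : ℝ := γt i * (1 - b) + b with hc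
  have hγi : 0 ≤ γt i := hγnn i
  have hcnn : 0 ≤ c := by positivity
  -- f^t_j ≤ βt i j * c for j ∈ A
  have hft : ∀ j ∈ A, (∑ i', βt i' j * γt i') ≤ βt i j * c := by
    intro j hj
    have hsplit : (∑ i', βt i' j * γt i')
        = βt i j * γt i + ∑ i' ∈ Finset.univ.erase i, βt i' j * γt i' := by
      rw [add_comm, Finset.sum_erase_add]
      exact Finset.mem_univ i
    have hrest : (∑ i' ∈ Finset.univ.erase i, βt i' j * γt i')
        ≤ ∑ i' ∈ Finset.univ.erase i, b * βt i j * γt i' := by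
      apply Finset.sum_le_sum
      intro k hk
      have hkne : k ≠ i := (Finset.mem_erase.mp hk).1
      have := hβtb k hkne j hj
      nlinarith [hγnn k]
    have hsum' : (∑ i' ∈ Finset.univ.erase i, γt i') = 1 - γt i := by
      have := Finset.sum_erase_add Finset.univ γt (Finset.mem_univ i)
      linarith
    have h2 : (∑ i' ∈ Finset.univ.erase i, b * βt i j * γt i')
        = b * βt i j * (1 - γt i) := by
      rw [← Finset.mul_sum, hsum']
    rw [hsplit, hc]
    rw [h2] at hrest
    nlinarith [hβtnn i j]
  -- key inequality
  have key : (1 - ε) * γsi * p ≤ c := by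
    by_cases hcz : c = 0
    · -- A must be empty
      have hA : A = ∅ := by
        by_contra hne
        obtain ⟨j, hj⟩ := Finset.nonempty_iff_ne_empty.mpr hne
        have := hftpos j hj
        have := hft j hj
        rw [hcz, mul_zero] at this
        linarith
      have : p ≤ 0 := by simpa [hA] using hp
      rw [hcz]
      have h1e : (0:ℝ) ≤ (1 - ε) * γsi := mul_nonneg (by linarith) hγsi
      nlinarith
    · have hcpos : 0 < c := lt_of_le_of_ne hcnn (Ne.symm hcz)
      have hterm : ∀ j ∈ A, (1 - ε) * βs j * γsi / c
          ≤ ftilde j / (∑ i', βt i' j * γt i') * βt i j := by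
        intro j hj
        have hftj := hftpos j hj
        have hle := hft j hj
        have hβti : 0 < βt i j := by
          rcases lt_or_ge 0 (βt i j) with h | h
          · exact h
          · exfalso; nlinarith
        rw [div_mul_eq_mul_div, div_le_div_iff₀ hcpos hftj]
        have hx : 0 ≤ (1 - ε) * βs j * γsi :=
          mul_nonneg (mul_nonneg (by linarith) (hβsnn j)) hγsi
        have hxle := hftilde j hj
        nlinarith
      have hsum2 : (∑ j ∈ A, (1 - ε) * βs j * γsi / c) ≤ 1 :=
        le_trans (Finset.sum_le_sum hterm) hstat
      have heq : (∑ j ∈ A, (1 - ε) * βs j * γsi / c)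
          = (1 - ε) * γsi * (∑ j ∈ A, βs j) / c := by
        rw [Finset.mul_sum, Finset.sum_div]
        exact Finset.sum_congr rfl fun j _ => by ring
      rw [heq, div_le_one hcpos] at hsum2
      have h1e : (0:ℝ) ≤ (1 - ε) * γsi := mul_nonneg (by linarith) hγsi
      calc (1 - ε) * γsi * p ≤ (1 - ε) * γsi * ∑ j ∈ A, βs j :=
            mul_le_mul_of_nonneg_left hp h1e
        _ ≤ c := hsum2
  rw [hc] at key
  have h2 : (1 - ε) * (p / (1 - b)) * γsi - b / (1 - b)
      = ((1 - ε) * γsi * p - b) / (1 - b) := by ring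
  rw [h2, div_le_iff₀ h1b]
  linarith
end

section
/- Fix κ ≥ 2. The function g(x) = 1 − (1 − x^{3/20}) / (1 − x^{3/20} + (1/κ)(x^{-37/20} − 1)) is monotonically decreasing for 0 < x < 1. -/
lemma stmt10_amgm (x : ℝ) (hx : 0 < x) :
    40 * x ^ ((-54:ℝ)/20) ≤ 3 * x ^ ((-17:ℝ)/20) + 37 * x ^ ((-57:ℝ)/20) := by
  have h := Real.geom_mean_le_arith_mean2_weighted
    (w₁ := 3/40) (w₂ := 37/40) (p₁ := x ^ ((-17:ℝ)/20)) (p₂ := x ^ ((-57:ℝ)/20))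
    (by norm_num) (by norm_num) (Real.rpow_nonneg hx.le _) (Real.rpow_nonneg hx.le _)
    (by norm_num)
  have e1 : (x ^ ((-17:ℝ)/20)) ^ ((3:ℝ)/40) * (x ^ ((-57:ℝ)/20)) ^ ((37:ℝ)/40)
      = x ^ ((-54:ℝ)/20) := by
    rw [← Real.rpow_mul hx.le, ← Real.rpow_mul hx.le, ← Real.rpow_add hx]
    norm_num
  linarith

theorem stmt10_key (κ : ℝ) (hκ : 2 ≤ κ) (x : ℝ) (hx1 : 0 < x) (hx2 : x < 1) :
    HasDerivAt (fun x : ℝ =>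
      1 - (1 - x ^ ((3:ℝ)/20)) / (1 - x ^ ((3:ℝ)/20) + (1/κ) * (x ^ (-(37:ℝ)/20) - 1)))
      (-(((-((3:ℝ)/20 * x ^ ((3:ℝ)/20 - 1))) * (1 - x ^ ((3:ℝ)/20) + (1/κ) * (x ^ (-(37:ℝ)/20) - 1))
        - (1 - x ^ ((3:ℝ)/20)) * ((-((3:ℝ)/20 * x ^ ((3:ℝ)/20 - 1))) + (1/κ) * ((-(37:ℝ)/20) * x ^ (-(37:ℝ)/20 - 1))))
        / (1 - x ^ ((3:ℝ)/20) + (1/κ) * (x ^ (-(37:ℝ)/20) - 1)) ^ 2)) x := by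
  have hκ0 : (0:ℝ) < κ := by linarith
  have hN0 : (0:ℝ) < 1 - x ^ ((3:ℝ)/20) := by
    have := Real.rpow_lt_one hx1.le hx2 (by norm_num : (0:ℝ) < 3/20)
    linarith
  have hv : (1:ℝ) < x ^ (-(37:ℝ)/20) := by
    rw [Real.one_lt_rpow_iff_of_pos hx1]
    right; constructor <;> [exact hx2; norm_num]
  have hD0 : (0:ℝ) < 1 - x ^ ((3:ℝ)/20) + (1/κ) * (x ^ (-(37:ℝ)/20) - 1) := by
    have : 0 < (1/κ) * (x ^ (-(37:ℝ)/20) - 1) := by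
      apply mul_pos (by positivity); linarith
    linarith
  have hp : HasDerivAt (fun y : ℝ => y ^ ((3:ℝ)/20)) ((3:ℝ)/20 * x ^ ((3:ℝ)/20 - 1)) x :=
    Real.hasDerivAt_rpow_const (Or.inl hx1.ne')
  have hq : HasDerivAt (fun y : ℝ => y ^ (-(37:ℝ)/20)) ((-(37:ℝ)/20) * x ^ (-(37:ℝ)/20 - 1)) x :=
    Real.hasDerivAt_rpow_const (Or.inl hx1.ne')
  have hN : HasDerivAt (fun y : ℝ => 1 - y ^ ((3:ℝ)/20)) (-((3:ℝ)/20 * x ^ ((3:ℝ)/20 - 1))) x :=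
    hp.const_sub 1
  have hE : HasDerivAt (fun y : ℝ => (1/κ) * (y ^ (-(37:ℝ)/20) - 1))
      ((1/κ) * ((-(37:ℝ)/20) * x ^ (-(37:ℝ)/20 - 1))) x := (hq.sub_const 1).const_mul _
  have hD : HasDerivAt (fun y : ℝ => 1 - y ^ ((3:ℝ)/20) + (1/κ) * (y ^ (-(37:ℝ)/20) - 1))
      ((-((3:ℝ)/20 * x ^ ((3:ℝ)/20 - 1))) + (1/κ) * ((-(37:ℝ)/20) * x ^ (-(37:ℝ)/20 - 1))) x :=
    hN.add hE
  exact (hN.div hD hD0.ne').const_sub 1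

/-- g(x) = 1 − (1 − x^{3/20})/(1 − x^{3/20} + (1/κ)(x^{-37/20} − 1)) is
monotonically decreasing on (0, 1). -/
theorem stmt10 (κ : ℝ) (hκ : 2 ≤ κ) :
    AntitoneOn (fun x : ℝ =>
      1 - (1 - x ^ ((3:ℝ)/20)) / (1 - x ^ ((3:ℝ)/20) + (1/κ) * (x ^ (-(37:ℝ)/20) - 1)))
      (Set.Ioo 0 1) := by
  apply antitoneOn_of_deriv_nonpos (convex_Ioo 0 1)
  · intro x hx
    exact (stmt10_key κ hκ x hx.1 hx.2).continuousAt.continuousWithinAt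
  · rw [interior_Ioo]
    intro x hx
    exact (stmt10_key κ hκ x hx.1 hx.2).differentiableAt.differentiableWithinAt
  · rw [interior_Ioo]
    intro x hx
    obtain ⟨hx1, hx2⟩ := hx
    rw [(stmt10_key κ hκ x hx1 hx2).deriv]
    have hκ0 : (0:ℝ) < κ := by linarith
    have ha : x ^ ((3:ℝ)/20 - 1) = x ^ ((-17:ℝ)/20) := by norm_num
    have hb : x ^ (-(37:ℝ)/20 - 1) = x ^ ((-57:ℝ)/20) := by norm_num
    have hav : x ^ ((-17:ℝ)/20) * x ^ (-(37:ℝ)/20) = x ^ ((-54:ℝ)/20) := by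
      rw [← Real.rpow_add hx1]; norm_num
    have hbu : x ^ ((-57:ℝ)/20) * x ^ ((3:ℝ)/20) = x ^ ((-54:ℝ)/20) := by
      rw [← Real.rpow_add hx1]; norm_num
    have hAM := stmt10_amgm x hx1
    rw [ha, hb]
    apply neg_nonpos_of_nonneg
    apply div_nonneg _ (sq_nonneg _)
    have hnum : -((3:ℝ)/20 * x ^ ((-17:ℝ)/20)) * (1 - x ^ ((3:ℝ)/20) + 1/κ * (x ^ (-(37:ℝ)/20) - 1))
        - (1 - x ^ ((3:ℝ)/20)) * (-((3:ℝ)/20 * x ^ ((-17:ℝ)/20)) + 1/κ * (-(37:ℝ)/20 * x ^ ((-57:ℝ)/20)))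
        = 1/(20*κ) * (3 * x ^ ((-17:ℝ)/20) + 37 * x ^ ((-57:ℝ)/20) - 40 * x ^ ((-54:ℝ)/20)) := by
      linear_combination (-(3:ℝ)/(20*κ)) * hav - ((37:ℝ)/(20*κ)) * hbu
    rw [hnum]
    apply mul_nonneg (by positivity)
    linarith
end

section
/- Let Y_i ~ Beta(α_i, α₀ − α_i) and Y_j ~ Beta(α_j, α₀ − α_j), where α_i = C_i/K^c, α_j = C_j/K^c for constants C_i, C_j > 0 and c > 1, and α₀ = Σ_k α_k = Θ(K^{1−c}). Then for any threshold x₀ = o(1) (as K → ∞), the ratio P(Y_i > x₀)/P(Y_j > x₀) is bounded above and below by positive constants independent of K. -/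
/-
For `0 < a, b ≤ 1` both factors of the Beta kernel `x ^ (a - 1) * (1 - x) ^ (b - 1)` are at
least `1` on `(0, 1)`, and on each half of `[0, 1]` one of them is at most `2`. Hence the upper
incomplete Beta integral from `x₀ ≤ 1/2` lies between a quarter and twice the explicit quantity
`(1 - x₀ ^ a) / a + 1 / b`. Since `(1 - x₀ ^ a) / a = ∫ t in x₀..1, t ^ (a - 1)` decreases in `a`
while `1 - x₀ ^ a` increases, this quantity changes by at most a factor `κ` when `a` and `b` do.
Applying this at `x₀` and at `0` compares the tail probabilities up to the factor `64 κ²`. For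
Dirichlet marginals with `α_i, α_j ≤ α₀ / 2`, both `α₀ - α_i` and `α₀ - α_j` lie in
`[α₀ / 2, α₀]`, so one may take `κ = 2 + C_i / C_j + C_j / C_i`.
-/

open Filter

/-- Upper-tail probability P(Y > x₀) for Y ~ Beta(a, b), written as the
normalized incomplete Beta integral. -/
noncomputable def betaTailProb (a b x0 : ℝ) : ℝ :=
  (∫ x in x0..1, x ^ (a - 1) * (1 - x) ^ (b - 1)) /
    (∫ x in (0:ℝ)..1, x ^ (a - 1) * (1 - x) ^ (b - 1))

open MeasureTheory Set intervalIntegral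

noncomputable def upperIncBeta (a b x₀ : ℝ) : ℝ :=
  ∫ x in x₀..1, x ^ (a - 1) * (1 - x) ^ (b - 1)

lemma betaTailProb_eq_div (a b x₀ : ℝ) :
    betaTailProb a b x₀ = upperIncBeta a b x₀ / upperIncBeta a b 0 := rfl

noncomputable def betaTailScale (a b x₀ : ℝ) : ℝ :=
  (1 - x₀ ^ a) / a + 1 / b

section Kernel

variable {a b : ℝ}

lemma rpow_sub_one_le_two {y : ℝ} (hb : 0 ≤ b) (hb1 : b ≤ 1) (hy : 1 / 2 ≤ y) :
    y ^ (b - 1) ≤ 2 :=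
  calc y ^ (b - 1) ≤ (1 / 2 : ℝ) ^ (b - 1) :=
        Real.rpow_le_rpow_of_nonpos (by norm_num) hy (by linarith)
    _ ≤ (1 / 2 : ℝ) ^ (-1 : ℝ) :=
        Real.rpow_le_rpow_of_exponent_ge (by norm_num) (by norm_num) (by linarith)
    _ = 2 := by norm_num [Real.rpow_neg_one]

lemma intervalIntegrable_one_sub_rpow_sub_one (hb : 0 < b) (s t : ℝ) :
    IntervalIntegrable (fun x => (1 - x) ^ (b - 1)) volume s t := by
  simpa using (intervalIntegrable_rpow' (a := 1 - s) (b := 1 - t) (r := b - 1)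
    (by linarith)).comp_sub_left 1

lemma intervalIntegrable_betaKernel (ha : 0 < a) (hb : 0 < b) {s t : ℝ}
    (hs : s ∈ Icc (0 : ℝ) 1) (ht : t ∈ Icc (0 : ℝ) 1) :
    IntervalIntegrable (fun x => x ^ (a - 1) * (1 - x) ^ (b - 1)) volume s t := by
  have hleft : IntervalIntegrable (fun x => x ^ (a - 1) * (1 - x) ^ (b - 1)) volume 0 (1 / 2) :=
    (intervalIntegrable_rpow' (by linarith)).mul_continuousOn <|
      (continuousOn_const.sub continuousOn_id).rpow_const fun x hx => Or.inl <| by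
        rw [uIcc_of_le (by norm_num)] at hx
        exact (sub_pos.2 (hx.2.trans_lt (by norm_num))).ne'
  have hright : IntervalIntegrable (fun x => x ^ (a - 1) * (1 - x) ^ (b - 1)) volume (1 / 2) 1 := by
    refine (intervalIntegrable_one_sub_rpow_sub_one hb _ _).continuousOn_mul <|
      continuousOn_id.rpow_const fun x hx => Or.inl ?_
    rw [uIcc_of_le (by norm_num)] at hx
    exact (hx.1.trans_lt' (by norm_num)).ne'
  refine (hleft.trans hright).mono_set ?_
  rw [uIcc_of_le zero_le_one]
  exact uIcc_subset_Icc hs ht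

lemma integral_rpow_sub_one (ha : 0 < a) (s t : ℝ) :
    ∫ x in s..t, x ^ (a - 1) = (t ^ a - s ^ a) / a := by
  rw [integral_rpow (Or.inl (by linarith))]
  norm_num

lemma integral_one_sub_rpow_sub_one (hb : 0 < b) (s t : ℝ) :
    ∫ x in s..t, (1 - x) ^ (b - 1) = ((1 - s) ^ b - (1 - t) ^ b) / b := by
  rw [intervalIntegral.integral_comp_sub_left (fun u => u ^ (b - 1)),
    integral_rpow (Or.inl (by linarith))]
  norm_num

end Kernel

section Bounds

variable {a b x₀ : ℝ}

lemma betaTailScale_div_four_le_upperIncBeta (ha : 0 < a) (ha1 : a ≤ 1) (hb : 0 < b)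
    (hb1 : b ≤ 1) (h0 : 0 ≤ x₀) (h2 : x₀ ≤ 1 / 2) :
    betaTailScale a b x₀ / 4 ≤ upperIncBeta a b x₀ := by
  have hF := intervalIntegrable_betaKernel ha hb ⟨h0, by linarith⟩ ⟨zero_le_one, le_rfl⟩
  have hx₁ : x₀ ≤ 1 := by linarith
  have hleft : (1 - x₀ ^ a) / a ≤ upperIncBeta a b x₀ := by
    have h := integral_rpow_sub_one ha x₀ 1
    rw [Real.one_rpow] at h
    rw [← h]
    refine integral_mono_on_of_le_Ioo hx₁ (intervalIntegrable_rpow' (by linarith)) hF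
      fun x hx => le_mul_of_one_le_right (Real.rpow_nonneg (h0.trans hx.1.le) _) ?_
    exact Real.one_le_rpow_of_pos_of_le_one_of_nonpos (by linarith [hx.2]) (by linarith [hx.1])
      (by linarith)
  have hright : (1 - x₀) ^ b / b ≤ upperIncBeta a b x₀ := by
    have h := integral_one_sub_rpow_sub_one hb x₀ 1
    rw [sub_self, Real.zero_rpow hb.ne', sub_zero] at h
    rw [← h]
    refine integral_mono_on_of_le_Ioo hx₁ (intervalIntegrable_one_sub_rpow_sub_one hb _ _) hF
      fun x hx => le_mul_of_one_le_left (Real.rpow_nonneg (by linarith [hx.2]) _) ?_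
    exact Real.one_le_rpow_of_pos_of_le_one_of_nonpos (h0.trans_lt hx.1) hx.2.le (by linarith)
  have hhalf : 1 / 2 ≤ (1 - x₀) ^ b :=
    calc (1 / 2 : ℝ) ≤ (1 - x₀) ^ (1 : ℝ) := by rw [Real.rpow_one]; linarith
      _ ≤ (1 - x₀) ^ b := Real.rpow_le_rpow_of_exponent_ge (by linarith) (by linarith) hb1
  have hb' : 1 / b / 2 ≤ (1 - x₀) ^ b / b := by
    rw [div_right_comm]
    exact div_le_div_of_nonneg_right hhalf hb.le
  have hbinv : 0 < 1 / b := by positivity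
  unfold betaTailScale
  linarith

lemma upperIncBeta_le_two_mul_betaTailScale (ha : 0 < a) (ha1 : a ≤ 1) (hb : 0 < b)
    (hb1 : b ≤ 1) (h0 : 0 ≤ x₀) (h2 : x₀ ≤ 1 / 2) :
    upperIncBeta a b x₀ ≤ 2 * betaTailScale a b x₀ := by
  have hhalf : (1 / 2 : ℝ) ∈ Icc (0 : ℝ) 1 := ⟨by norm_num, by norm_num⟩
  have hleft : ∫ x in x₀..1 / 2, x ^ (a - 1) * (1 - x) ^ (b - 1) ≤ 2 * ((1 - x₀ ^ a) / a) := by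
    calc ∫ x in x₀..1 / 2, x ^ (a - 1) * (1 - x) ^ (b - 1)
        ≤ ∫ x in x₀..1 / 2, 2 * x ^ (a - 1) := by
          refine integral_mono_on h2 (intervalIntegrable_betaKernel ha hb ⟨h0, by linarith⟩ hhalf)
            ((intervalIntegrable_rpow' (by linarith)).const_mul 2) fun x hx => ?_
          rw [mul_comm 2]
          exact mul_le_mul_of_nonneg_left (rpow_sub_one_le_two hb.le hb1 (by linarith [hx.2]))
            (Real.rpow_nonneg (h0.trans hx.1) _)
      _ = 2 * (((1 / 2) ^ a - x₀ ^ a) / a) := by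
          rw [intervalIntegral.integral_const_mul, integral_rpow_sub_one ha]
      _ ≤ 2 * ((1 - x₀ ^ a) / a) := by
          gcongr
          exact Real.rpow_le_one (by norm_num) (by norm_num) ha.le
  have hright : ∫ x in (1 / 2 : ℝ)..1, x ^ (a - 1) * (1 - x) ^ (b - 1) ≤ 2 * (1 / b) := by
    calc ∫ x in (1 / 2 : ℝ)..1, x ^ (a - 1) * (1 - x) ^ (b - 1)
        ≤ ∫ x in (1 / 2 : ℝ)..1, 2 * (1 - x) ^ (b - 1) := by
          refine integral_mono_on (by norm_num)
            (intervalIntegrable_betaKernel ha hb hhalf ⟨zero_le_one, le_rfl⟩)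
            ((intervalIntegrable_one_sub_rpow_sub_one hb _ _).const_mul 2) fun x hx =>
              mul_le_mul_of_nonneg_right (rpow_sub_one_le_two ha.le ha1 hx.1)
                (Real.rpow_nonneg (by linarith [hx.2]) _)
      _ = 2 * ((1 / 2) ^ b / b) := by
          rw [intervalIntegral.integral_const_mul, integral_one_sub_rpow_sub_one hb]
          norm_num [Real.zero_rpow hb.ne']
      _ ≤ 2 * (1 / b) := by
          gcongr
          exact Real.rpow_le_one (by norm_num) (by norm_num) hb.le
  rw [upperIncBeta, ← integral_add_adjacent_intervals
    (intervalIntegrable_betaKernel ha hb ⟨h0, by linarith⟩ hhalf)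
    (intervalIntegrable_betaKernel ha hb hhalf ⟨zero_le_one, le_rfl⟩), betaTailScale]
  linarith

end Bounds

section Scale
variable {a a' b b' x κ : ℝ}

lemma one_sub_rpow_div_le_of_le (hx0 : 0 ≤ x) (hx1 : x ≤ 1) (ha : 0 < a) (haa' : a ≤ a') :
    (1 - x ^ a') / a' ≤ (1 - x ^ a) / a := by
  have h := integral_rpow_sub_one ha x 1
  have h' := integral_rpow_sub_one (ha.trans_le haa') x 1
  rw [Real.one_rpow] at h h'
  rw [← h, ← h']
  exact integral_mono_on_of_le_Ioo hx1 (intervalIntegrable_rpow' (by linarith))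
    (intervalIntegrable_rpow' (by linarith)) fun t ht =>
      Real.rpow_le_rpow_of_exponent_ge (hx0.trans_lt ht.1) ht.2.le (by linarith)

lemma one_sub_rpow_div_le_mul (hx0 : 0 ≤ x) (hx1 : x ≤ 1) (ha : 0 < a) (ha' : 0 < a')
    (hκ : 1 ≤ κ) (h : a' ≤ κ * a) :
    (1 - x ^ a) / a ≤ κ * ((1 - x ^ a') / a') := by
  have hnonneg : 0 ≤ (1 - x ^ a') / a' :=
    div_nonneg (sub_nonneg.2 (Real.rpow_le_one hx0 hx1 ha'.le)) ha'.le
  rcases le_total a' a with hle | hle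
  · exact (one_sub_rpow_div_le_of_le hx0 hx1 ha' hle).trans (le_mul_of_one_le_left hnonneg hκ)
  · calc (1 - x ^ a) / a ≤ (1 - x ^ a') / a :=
          div_le_div_of_nonneg_right
            (by linarith [Real.rpow_le_rpow_of_exponent_ge' hx0 hx1 ha.le hle]) ha.le
      _ = a' / a * ((1 - x ^ a') / a') := by field_simp
      _ ≤ κ * ((1 - x ^ a') / a') := by
          gcongr
          exact (div_le_iff₀ ha).2 h

lemma betaTailScale_le_mul (hx0 : 0 ≤ x) (hx1 : x ≤ 1) (ha : 0 < a) (ha' : 0 < a') (hb : 0 < b)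
    (hb' : 0 < b') (hκ : 1 ≤ κ) (haa' : a' ≤ κ * a) (hbb' : b' ≤ κ * b) :
    betaTailScale a b x ≤ κ * betaTailScale a' b' x := by
  have hinv : 1 / b ≤ κ * (1 / b') := by
    rw [mul_one_div, div_le_div_iff₀ hb hb']
    linarith
  rw [betaTailScale, betaTailScale, mul_add]
  exact add_le_add (one_sub_rpow_div_le_mul hx0 hx1 ha ha' hκ haa') hinv

lemma betaTailScale_pos (hx0 : 0 ≤ x) (hx1 : x ≤ 1) (ha : 0 < a) (hb : 0 < b) :
    0 < betaTailScale a b x :=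
  add_pos_of_nonneg_of_pos (div_nonneg (sub_nonneg.2 (Real.rpow_le_one hx0 hx1 ha.le)) ha.le)
    (one_div_pos.2 hb)

end Scale

section Ratio
variable {a a' b b' x₀ κ : ℝ}

lemma upperIncBeta_pos (ha : 0 < a) (ha1 : a ≤ 1) (hb : 0 < b) (hb1 : b ≤ 1) (h0 : 0 ≤ x₀)
    (h2 : x₀ ≤ 1 / 2) :
    0 < upperIncBeta a b x₀ :=
  (div_pos (betaTailScale_pos h0 (by linarith) ha hb) four_pos).trans_le
    (betaTailScale_div_four_le_upperIncBeta ha ha1 hb hb1 h0 h2)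

lemma betaTailProb_pos (ha : 0 < a) (ha1 : a ≤ 1) (hb : 0 < b) (hb1 : b ≤ 1) (h0 : 0 ≤ x₀)
    (h2 : x₀ ≤ 1 / 2) :
    0 < betaTailProb a b x₀ :=
  div_pos (upperIncBeta_pos ha ha1 hb hb1 h0 h2)
    (upperIncBeta_pos ha ha1 hb hb1 le_rfl (by norm_num))

lemma betaTailProb_le_mul (ha : 0 < a) (ha1 : a ≤ 1) (ha' : 0 < a') (ha'1 : a' ≤ 1)
    (hb : 0 < b) (hb1 : b ≤ 1) (hb' : 0 < b') (hb'1 : b' ≤ 1) (h0 : 0 ≤ x₀) (h2 : x₀ ≤ 1 / 2)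
    (hκ : 1 ≤ κ) (haa' : a ≤ κ * a') (ha'a : a' ≤ κ * a) (hbb' : b ≤ κ * b') (hb'b : b' ≤ κ * b) :
    betaTailProb a b x₀ ≤ 64 * κ ^ 2 * betaTailProb a' b' x₀ := by
  have hx₁ : x₀ ≤ 1 := by linarith
  have hS := betaTailScale_pos h0 hx₁ ha hb
  have hS' := betaTailScale_pos h0 hx₁ ha' hb'
  have hS₀ := betaTailScale_pos le_rfl zero_le_one ha hb
  have hS₀' := betaTailScale_pos le_rfl zero_le_one ha' hb'
  have hscale₀ : betaTailScale a' b' 0 / κ ≤ betaTailScale a b 0 :=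
    (div_le_iff₀ (by linarith)).2 <| by
      linarith [betaTailScale_le_mul le_rfl zero_le_one ha' ha hb' hb hκ haa' hbb']
  rw [betaTailProb_eq_div, betaTailProb_eq_div]
  calc upperIncBeta a b x₀ / upperIncBeta a b 0
      ≤ 2 * betaTailScale a b x₀ / (betaTailScale a b 0 / 4) :=
        div_le_div₀ (by positivity) (upperIncBeta_le_two_mul_betaTailScale ha ha1 hb hb1 h0 h2)
          (by positivity)
          (betaTailScale_div_four_le_upperIncBeta ha ha1 hb hb1 le_rfl (by norm_num))
    _ ≤ 2 * (κ * betaTailScale a' b' x₀) / (betaTailScale a' b' 0 / κ / 4) := by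
        gcongr
        exact betaTailScale_le_mul h0 hx₁ ha ha' hb hb' hκ ha'a hb'b
    _ = 64 * κ ^ 2 * (betaTailScale a' b' x₀ / 4 / (2 * betaTailScale a' b' 0)) := by
        field_simp
        ring
    _ ≤ 64 * κ ^ 2 * (upperIncBeta a' b' x₀ / upperIncBeta a' b' 0) := by
        have hT' := betaTailScale_div_four_le_upperIncBeta ha' ha'1 hb' hb'1 h0 h2
        have hT₀' := upperIncBeta_le_two_mul_betaTailScale ha' ha'1 hb' hb'1 le_rfl (by norm_num)
        gcongr 64 * κ ^ 2 * ?_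
        exact div_le_div₀ (by linarith) hT'
          (upperIncBeta_pos ha' ha'1 hb' hb'1 le_rfl (by norm_num)) hT₀'

lemma betaTailProb_sub_le_mul {α : ℝ} (ha : 0 < a) (ha' : 0 < a') (hα : α ≤ 1)
    (haα : a ≤ α / 2) (ha'α : a' ≤ α / 2) (h0 : 0 ≤ x₀) (h2 : x₀ ≤ 1 / 2) (hκ : 2 ≤ κ)
    (haa' : a ≤ κ * a') (ha'a : a' ≤ κ * a) :
    betaTailProb a (α - a) x₀ ≤ 64 * κ ^ 2 * betaTailProb a' (α - a') x₀ := by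
  have hκb := mul_le_mul_of_nonneg_right hκ (by linarith : 0 ≤ α - a')
  have hκb' := mul_le_mul_of_nonneg_right hκ (by linarith : 0 ≤ α - a)
  exact betaTailProb_le_mul ha (by linarith) ha' (by linarith) (by linarith) (by linarith)
    (by linarith) (by linarith) h0 h2 (by linarith) haa' ha'a (by linarith) (by linarith)

end Ratio

section Asymptotics
variable {c : ℝ} {α₀ : ℕ → ℝ}

lemma eventually_div_rpow_le_half {C c₁ : ℝ} (hc₁ : 0 < c₁)
    (h : ∀ᶠ K : ℕ in atTop, c₁ * (K : ℝ) ^ (1 - c) ≤ α₀ K) :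
    ∀ᶠ K : ℕ in atTop, C / (K : ℝ) ^ c ≤ α₀ K / 2 := by
  filter_upwards [h, tendsto_natCast_atTop_atTop.eventually_ge_atTop (2 * C / c₁),
    tendsto_natCast_atTop_atTop.eventually_gt_atTop (0 : ℝ)] with K hK hCK hKpos
  have hC : C ≤ c₁ * K / 2 := by
    rw [div_le_iff₀ hc₁] at hCK
    linarith
  rw [Real.rpow_sub hKpos, Real.rpow_one] at hK
  calc C / (K : ℝ) ^ c ≤ c₁ * K / 2 / (K : ℝ) ^ c :=
        div_le_div_of_nonneg_right hC (Real.rpow_nonneg hKpos.le c)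
    _ = c₁ * (K / (K : ℝ) ^ c) / 2 := by ring
    _ ≤ α₀ K / 2 := by linarith

lemma eventually_le_one_of_le_rpow {c₂ : ℝ} (hc : 1 < c)
    (h : ∀ᶠ K : ℕ in atTop, α₀ K ≤ c₂ * (K : ℝ) ^ (1 - c)) :
    ∀ᶠ K : ℕ in atTop, α₀ K ≤ 1 := by
  have hlim : Tendsto (fun K : ℕ => c₂ * (K : ℝ) ^ (1 - c)) atTop (nhds 0) := by
    have h := (tendsto_rpow_neg_atTop (y := c - 1) (by linarith)).comp tendsto_natCast_atTop_atTop
    simpa [neg_sub, Function.comp_def] using h.const_mul c₂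
  filter_upwards [h, hlim.eventually_lt_const one_pos] with K hK hK1
  linarith

end Asymptotics

theorem stmt16_general (Ci Cj c : ℝ) (hCi : 0 < Ci) (hCj : 0 < Cj) (hc : 1 < c)
    (α0 x0 : ℕ → ℝ)
    (hα0 : ∃ c1 c2 : ℝ, 0 < c1 ∧ 0 < c2 ∧ ∀ᶠ K : ℕ in atTop,
      c1 * (K:ℝ) ^ (1 - c) ≤ α0 K ∧ α0 K ≤ c2 * (K:ℝ) ^ (1 - c))
    (hx0 : Tendsto x0 atTop (nhds 0))
    (hx0' : ∀ᶠ K : ℕ in atTop, 0 < x0 K ∧ x0 K < 1) :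
    ∃ m M : ℝ, 0 < m ∧ ∀ᶠ K : ℕ in atTop,
      m ≤ betaTailProb (Ci / (K:ℝ) ^ c) (α0 K - Ci / (K:ℝ) ^ c) (x0 K) /
            betaTailProb (Cj / (K:ℝ) ^ c) (α0 K - Cj / (K:ℝ) ^ c) (x0 K) ∧
      betaTailProb (Ci / (K:ℝ) ^ c) (α0 K - Ci / (K:ℝ) ^ c) (x0 K) /
            betaTailProb (Cj / (K:ℝ) ^ c) (α0 K - Cj / (K:ℝ) ^ c) (x0 K) ≤ M := by
  obtain ⟨c1, c2, hc1, -, hα⟩ := hα0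
  set κ := 2 + Ci / Cj + Cj / Ci
  have hκ : 2 ≤ κ := by have := div_pos hCi hCj; have := div_pos hCj hCi; linarith
  have hij : Ci ≤ κ * Cj := by rw [← div_le_iff₀ hCj]; linarith [div_pos hCj hCi]
  have hji : Cj ≤ κ * Ci := by rw [← div_le_iff₀ hCi]; linarith [div_pos hCi hCj]
  refine ⟨(64 * κ ^ 2)⁻¹, 64 * κ ^ 2, by positivity, ?_⟩
  filter_upwards [eventually_div_rpow_le_half hc1 (hα.mono fun _ h => h.1) (C := Ci),
    eventually_div_rpow_le_half hc1 (hα.mono fun _ h => h.1) (C := Cj),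
    eventually_le_one_of_le_rpow hc (hα.mono fun _ h => h.2), hx0',
    hx0.eventually_le_const (by norm_num : (0 : ℝ) < 1 / 2), eventually_gt_atTop 0]
    with K hi hj hα1 hx hx2 hK
  have hKc : 0 < (K : ℝ) ^ c := Real.rpow_pos_of_pos (Nat.cast_pos.2 hK) c
  have hai := div_pos hCi hKc
  have haj := div_pos hCj hKc
  have hij' : Ci / (K : ℝ) ^ c ≤ κ * (Cj / (K : ℝ) ^ c) := by
    rw [← mul_div_assoc]; exact div_le_div_of_nonneg_right hij hKc.le
  have hji' : Cj / (K : ℝ) ^ c ≤ κ * (Ci / (K : ℝ) ^ c) := by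
    rw [← mul_div_assoc]; exact div_le_div_of_nonneg_right hji hKc.le
  have hpos : 0 < betaTailProb (Cj / (K : ℝ) ^ c) (α0 K - Cj / (K : ℝ) ^ c) (x0 K) :=
    betaTailProb_pos haj (by linarith) (by linarith) (by linarith) hx.1.le hx2
  constructor
  · rw [le_div_iff₀ hpos, inv_mul_le_iff₀ (by positivity)]
    exact betaTailProb_sub_le_mul haj hai hα1 hj hi hx.1.le hx2 hκ hji' hij'
  · exact (div_le_iff₀ hpos).2 (betaTailProb_sub_le_mul hai haj hα1 hi hj hx.1.le hx2 hκ hij' hji')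

/-- Comparability of the Dirichlet-marginal upper tails: for α_i = C_i/K^c,
α_j = C_j/K^c, α₀ = Θ(K^{1−c}) and any threshold x₀ = o(1), the ratio
P(Y_i > x₀)/P(Y_j > x₀) of the Beta marginal tails is bounded above and below
by positive constants independent of K. -/
theorem stmt16 (Ci Cj c : ℝ) (hCi : 0 < Ci) (hCj : 0 < Cj) (hc : 1 < c)
    (α0 x0 : ℕ → ℝ)
    (hα0 : ∃ c1 c2 : ℝ, 0 < c1 ∧ 0 < c2 ∧ ∀ᶠ K : ℕ in atTop,
      c1 * (K:ℝ) ^ (1 - c) ≤ α0 K ∧ α0 K ≤ c2 * (K:ℝ) ^ (1 - c))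
    (hgap : ∀ᶠ K : ℕ in atTop, Ci / (K:ℝ) ^ c < α0 K ∧ Cj / (K:ℝ) ^ c < α0 K)
    (hx0 : Tendsto x0 atTop (nhds 0))
    (hx0' : ∀ᶠ K : ℕ in atTop, 0 < x0 K ∧ x0 K < 1) :
    ∃ m M : ℝ, 0 < m ∧ ∀ᶠ K : ℕ in atTop,
      m ≤ betaTailProb (Ci / (K:ℝ) ^ c) (α0 K - Ci / (K:ℝ) ^ c) (x0 K) /
            betaTailProb (Cj / (K:ℝ) ^ c) (α0 K - Cj / (K:ℝ) ^ c) (x0 K) ∧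
      betaTailProb (Ci / (K:ℝ) ^ c) (α0 K - Ci / (K:ℝ) ^ c) (x0 K) /
            betaTailProb (Cj / (K:ℝ) ^ c) (α0 K - Cj / (K:ℝ) ^ c) (x0 K) ≤ M :=
  stmt16_general Ci Cj c hCi hCj hc α0 x0 hα0 hx0 hx0'
end

section
/- Let 0 < C_γ ≤ C_β^{1/10} and C_β ≥ (1/(1−ε))^{20} for ε ∈ (0,1/2]. Suppose μ ∈ [0,1] satisfies μ > 1 − (C_β^{-9/20} − C_β^{-1/2}) / (C_β^{-9/20} − C_β^{-23/10}). Then μ · C_β^{-1/4} C_γ^{-2} + (1−μ) · C_β^{-2} C_γ^{-3} ≥ C_β^{-3/4}. -/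
/-- Key algebraic inequality: a convex combination with large enough weight μ on
C_β^{-1/4}C_γ^{-2} dominates C_β^{-3/4}, given C_γ ≤ C_β^{1/10} and
C_β ≥ (1/(1−ε))^{20}. -/
theorem stmt17 (Cβ Cγ ε μ : ℝ) (hε0 : 0 < ε) (hε1 : ε ≤ 1/2)
    (hCγ : 0 < Cγ) (hCγβ : Cγ ≤ Cβ ^ ((1:ℝ)/10))
    (hCβ : (1/(1-ε)) ^ ((20:ℝ)) ≤ Cβ)
    (hμ0 : 0 ≤ μ) (hμ1 : μ ≤ 1)
    (hμ : 1 - (Cβ ^ (-(9:ℝ)/20) - Cβ ^ (-(1:ℝ)/2)) /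
            (Cβ ^ (-(9:ℝ)/20) - Cβ ^ (-(23:ℝ)/10)) < μ) :
    Cβ ^ (-(3:ℝ)/4) ≤
      μ * Cβ ^ (-(1:ℝ)/4) * Cγ ^ (-(2:ℝ)) + (1 - μ) * Cβ ^ (-(2:ℝ)) * Cγ ^ (-(3:ℝ)) := by
  have hε2 : (0:ℝ) < 1 - ε := by linarith
  have h1 : (1:ℝ) < 1/(1-ε) := by rw [lt_div_iff₀ hε2]; linarith
  have hCβ1 : (1:ℝ) < Cβ :=
    lt_of_lt_of_le ((Real.one_lt_rpow_iff_of_pos (by linarith)).mpr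
      (Or.inl ⟨h1, by norm_num⟩)) hCβ
  have hCβ0 : (0:ℝ) < Cβ := by linarith
  have h2 : Cβ ^ (-(1:ℝ)/5) ≤ Cγ ^ (-(2:ℝ)) := by
    calc Cβ ^ (-(1:ℝ)/5) = (Cβ ^ ((1:ℝ)/10)) ^ (-(2:ℝ)) := by
          rw [← Real.rpow_mul hCβ0.le]; norm_num
      _ ≤ Cγ ^ (-(2:ℝ)) := Real.rpow_le_rpow_of_nonpos hCγ hCγβ (by norm_num)
  have h3 : Cβ ^ (-(3:ℝ)/10) ≤ Cγ ^ (-(3:ℝ)) := by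
    calc Cβ ^ (-(3:ℝ)/10) = (Cβ ^ ((1:ℝ)/10)) ^ (-(3:ℝ)) := by
          rw [← Real.rpow_mul hCβ0.le]; norm_num
      _ ≤ Cγ ^ (-(3:ℝ)) := Real.rpow_le_rpow_of_nonpos hCγ hCγβ (by norm_num)
  set A := Cβ ^ (-(9:ℝ)/20) with hA
  set B := Cβ ^ (-(23:ℝ)/10) with hB
  set D := Cβ ^ (-(1:ℝ)/2) with hD
  have hAB : B < A := (Real.rpow_lt_rpow_left_iff hCβ1).mpr (by norm_num)
  have hCD : Cβ ^ (-(3:ℝ)/4) ≤ D := (Real.rpow_le_rpow_left_iff hCβ1).mpr (by norm_num)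
  have hpos : 0 < A - B := by linarith
  have hkey : (1 - μ) * (A - B) < A - D := by
    have : 1 - μ < (A - D) / (A - B) := by linarith
    exact (lt_div_iff₀ hpos).mp this
  have key : D ≤ μ * A + (1 - μ) * B := by nlinarith
  have e1 : Cβ ^ (-(1:ℝ)/4) * Cβ ^ (-(1:ℝ)/5) = A := by
    rw [hA, ← Real.rpow_add hCβ0]; norm_num
  have e2 : Cβ ^ (-(2:ℝ)) * Cβ ^ (-(3:ℝ)/10) = B := by
    rw [hB, ← Real.rpow_add hCβ0]; norm_num
  have t1 : μ * A ≤ μ * Cβ ^ (-(1:ℝ)/4) * Cγ ^ (-(2:ℝ)) := by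
    calc μ * A = μ * Cβ ^ (-(1:ℝ)/4) * Cβ ^ (-(1:ℝ)/5) := by rw [mul_assoc, e1]
      _ ≤ _ := mul_le_mul_of_nonneg_left h2
          (mul_nonneg hμ0 (Real.rpow_pos_of_pos hCβ0 _).le)
  have t2 : (1 - μ) * B ≤ (1 - μ) * Cβ ^ (-(2:ℝ)) * Cγ ^ (-(3:ℝ)) := by
    calc (1 - μ) * B = (1 - μ) * Cβ ^ (-(2:ℝ)) * Cβ ^ (-(3:ℝ)/10) := by rw [mul_assoc, e2]
      _ ≤ _ := mul_le_mul_of_nonneg_left h3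
          (mul_nonneg (by linarith) (Real.rpow_pos_of_pos hCβ0 _).le)
  linarith
end
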